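/- arXiv:1908.00526 — 2 statements merged into one kernel-verified Lean document; each statement's English description precedes it below -/
import Mathlib

section
/- For every β ∈ [0,1), the complex eigenvalues of the monodromy matrix γ_{β,0}(2π) are exactly exp(2π√(−1)·√(1−β)) and exp(−2π√(−1)·√(1−β)). In particular, for β = 3/4 one has γ_{3/4,0}(2π) = −I₂. -/
/-!
For `e = 0` the coefficient `J B_{β,0} = !![0, -(1 - β); 1, 0]` is constant: the system is a
harmonic oscillator of frequency `ω = √(1 - β)`, whose flow is written down explicitly and, by
uniqueness for linear ODEs, equals `γ`. That flow has determinant `1` and trace `2 cos (ω t)`, so its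
characteristic polynomial factors as `(μ - e^{iωt}) (μ - e^{-iωt})`. For `β = 3/4` we have
`ω = 1/2`, so at `t = 2π` the phase `ωt` is `π` and the flow is `-1`.
-/

open Real Matrix

attribute [local instance] Matrix.normedAddCommGroup

noncomputable section

/-- The standard symplectic matrix `J = [[0,-1],[1,0]]`. -/
def Jmat : Matrix (Fin 2) (Fin 2) ℝ := !![0, -1; 1, 0]

/-- The coefficient matrix `B_{β,e}(t) = diag(1, 1 - β/(1 + e cos t))`. -/
def Bmat (β e t : ℝ) : Matrix (Fin 2) (Fin 2) ℝ :=
  !![1, 0; 0, 1 - β / (1 + e * Real.cos t)]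

/-- `γ` is the fundamental solution of `γ' = J B_{β,e} γ`, `γ(0) = I₂`
(derivative taken entrywise). -/
def IsFundSol (β e : ℝ) (γ : ℝ → Matrix (Fin 2) (Fin 2) ℝ) : Prop :=
  γ 0 = 1 ∧ ∀ (t : ℝ) (i j : Fin 2),
    HasDerivAt (fun s => γ s i j) ((Jmat * Bmat β e t * γ t) i j) t

/-- The trace-formula function `f(β,-1)`. -/
def fTrace (β : ℝ) : ℝ :=
  β ^ 2 / (2 * (1 - β)) *
    ∫ s in (π / 2)..(3 * π / 2), ∫ t in (π / 2)..(3 * π / 2),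
      Real.cos s * Real.cos t *
        (Real.cos (2 * π * Real.sqrt (1 - β) * (s - t)) ^ 2 /
            Real.cos (π * Real.sqrt (1 - β)) ^ 2 -
          Real.cos (4 * π * Real.sqrt (1 - β) * (s - t + 1 / 4)) /
            Real.cos (π * Real.sqrt (1 - β)))

attribute [local instance] Matrix.normedSpace

theorem ContinuousLinearMap.eq_of_hasDerivAt_apply {E : Type*} [NormedAddCommGroup E]
    [NormedSpace ℝ E] (L : E →L[ℝ] E) {x y : ℝ → E} {t₀ : ℝ}
    (hx : ∀ t, HasDerivAt x (L (x t)) t) (hy : ∀ t, HasDerivAt y (L (y t)) t)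
    (h : x t₀ = y t₀) : x = y :=
  ODE_solution_unique_univ (v := fun _ => L) (s := fun _ => Set.univ) (K := ‖L‖₊)
    (fun _ => L.lipschitz.lipschitzOnWith) (fun t => ⟨hx t, trivial⟩) (fun t => ⟨hy t, trivial⟩) h

theorem Matrix.eq_of_hasDerivAt_mul_left {n : Type*} [Fintype n]
    (A : Matrix n n ℝ) {X Y : ℝ → Matrix n n ℝ} {t₀ : ℝ}
    (hX : ∀ t, HasDerivAt X (A * X t) t) (hY : ∀ t, HasDerivAt Y (A * Y t) t)
    (h : X t₀ = Y t₀) : X = Y :=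
  (LinearMap.mulLeft ℝ A).toContinuousLinearMap.eq_of_hasDerivAt_apply hX hY h

theorem Matrix.det_sub_smul_one_fin_two {R : Type*} [CommRing R] (M : Matrix (Fin 2) (Fin 2) R)
    (μ : R) : (M - μ • 1).det = μ ^ 2 - M.trace * μ + M.det := by
  simp only [det_fin_two, trace_fin_two, sub_apply, smul_apply, one_apply_eq,
    one_apply_ne zero_ne_one, one_apply_ne one_ne_zero, smul_eq_mul]
  ring

theorem Complex.sq_sub_two_cos_mul_add_one_eq_zero_iff (θ μ : ℂ) :
    μ ^ 2 - 2 * cos θ * μ + 1 = 0 ↔ μ = exp (θ * I) ∨ μ = exp (-(θ * I)) := by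
  have hprod : exp (θ * I) * exp (-(θ * I)) = 1 := by rw [← exp_add, add_neg_cancel, exp_zero]
  have hfactor : μ ^ 2 - 2 * cos θ * μ + 1 = (μ - exp (θ * I)) * (μ - exp (-(θ * I))) := by
    rw [two_cos, neg_mul]
    linear_combination -hprod
  rw [hfactor, mul_eq_zero, sub_eq_zero, sub_eq_zero]

theorem Matrix.det_map_ofReal_sub_smul_one_eq_zero_iff {M : Matrix (Fin 2) (Fin 2) ℝ} {θ : ℝ}
    (hdet : M.det = 1) (htrace : M.trace = 2 * Real.cos θ) (μ : ℂ) :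
    (M.map (fun x => (x : ℂ)) - μ • 1).det = 0 ↔
      μ = Complex.exp (θ * Complex.I) ∨ μ = Complex.exp (-(θ * Complex.I)) := by
  have hdetℂ : (M.map (fun x => (x : ℂ))).det = 1 := by
    rw [← Complex.ofReal_one, ← hdet]; exact (Complex.ofRealHom.map_det M).symm
  have htraceℂ : (M.map (fun x => (x : ℂ))).trace = 2 * Complex.cos θ := by
    rw [← Complex.ofReal_cos, ← Complex.ofReal_ofNat, ← Complex.ofReal_mul, ← htrace]
    exact (AddMonoidHom.map_trace Complex.ofRealHom M).symm
  rw [det_sub_smul_one_fin_two, hdetℂ, htraceℂ, Complex.sq_sub_two_cos_mul_add_one_eq_zero_iff]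

def harmonicFlow (ω t : ℝ) : Matrix (Fin 2) (Fin 2) ℝ :=
  !![Real.cos (ω * t), -ω * Real.sin (ω * t);
     Real.sin (ω * t) / ω, Real.cos (ω * t)]

theorem hasDerivAt_harmonicFlow {ω : ℝ} (hω : ω ≠ 0) (t : ℝ) :
    HasDerivAt (harmonicFlow ω) (!![0, -ω ^ 2; 1, 0] * harmonicFlow ω t) t := by
  have hθ : HasDerivAt (fun s : ℝ => ω * s) ω t := by
    simpa using (hasDerivAt_id t).const_mul ω
  rw [harmonicFlow, mul_fin_two]
  refine hasDerivAt_pi.mpr fun i => hasDerivAt_pi.mpr fun j => ?_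
  fin_cases i <;> fin_cases j <;>
    simp only [Fin.zero_eta, Fin.mk_one, of_apply, cons_val', cons_val_zero, cons_val_one,
      cons_val_fin_one]
  · exact hθ.cos.congr_deriv (by field_simp; ring)
  · exact (hθ.sin.const_mul (-ω)).congr_deriv (by ring)
  · exact (hθ.sin.div_const ω).congr_deriv (by field_simp; ring)
  · exact hθ.cos.congr_deriv (by ring)

theorem harmonicFlow_zero (ω : ℝ) : harmonicFlow ω 0 = 1 := by
  simp [harmonicFlow, Matrix.one_fin_two]

theorem det_harmonicFlow {ω : ℝ} (hω : ω ≠ 0) (t : ℝ) : (harmonicFlow ω t).det = 1 := by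
  rw [harmonicFlow, det_fin_two_of]
  field_simp
  linear_combination Real.sin_sq_add_cos_sq (ω * t)

theorem trace_harmonicFlow (ω t : ℝ) : (harmonicFlow ω t).trace = 2 * Real.cos (ω * t) := by
  rw [harmonicFlow, trace_fin_two_of]
  ring

theorem harmonicFlow_eq_neg_one {ω t : ℝ} (h : ω * t = π) : harmonicFlow ω t = -1 := by
  ext i j
  fin_cases i <;> fin_cases j <;> simp [harmonicFlow, h]

theorem Jmat_mul_Bmat_zero (β t : ℝ) : Jmat * Bmat β 0 t = !![0, -(1 - β); 1, 0] := by
  simp [Jmat, Bmat]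

theorem IsFundSol.hasDerivAt {β e : ℝ} {γ : ℝ → Matrix (Fin 2) (Fin 2) ℝ} (hγ : IsFundSol β e γ)
    (t : ℝ) : HasDerivAt γ (Jmat * Bmat β e t * γ t) t :=
  hasDerivAt_pi.mpr fun i => hasDerivAt_pi.mpr fun j => hγ.2 t i j

theorem IsFundSol.eq_harmonicFlow {β : ℝ} (hβ : β < 1) {γ : ℝ → Matrix (Fin 2) (Fin 2) ℝ}
    (hγ : IsFundSol β 0 γ) : γ = harmonicFlow (√(1 - β)) := by
  have hω : √(1 - β) ≠ 0 := (Real.sqrt_pos.mpr (sub_pos.mpr hβ)).ne'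
  refine Matrix.eq_of_hasDerivAt_mul_left _ (t₀ := 0) (fun t => ?_) (hasDerivAt_harmonicFlow hω)
    (by rw [hγ.1, harmonicFlow_zero])
  have hderiv := hγ.hasDerivAt t
  rwa [Jmat_mul_Bmat_zero, ← Real.sq_sqrt (sub_nonneg.mpr hβ.le)] at hderiv

/-- the complex eigenvalues of `γ_{β,0}(2π)` are exactly
`exp(±2πi√(1-β))`; in particular `γ_{3/4,0}(2π) = -I₂`. -/
theorem stmt_3 (β : ℝ) (hβ : β ∈ Set.Ico (0 : ℝ) 1)
    (γ : ℝ → Matrix (Fin 2) (Fin 2) ℝ) (hγ : IsFundSol β 0 γ) :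
    (∀ μ : ℂ,
      Matrix.det ((γ (2 * π)).map (fun x => (x : ℂ)) - μ • 1) = 0 ↔
        μ = Complex.exp (2 * π * Complex.I * Real.sqrt (1 - β)) ∨
        μ = Complex.exp (-(2 * π * Complex.I * Real.sqrt (1 - β)))) ∧
    (β = 3 / 4 → γ (2 * π) = -1) := by
  have hω : √(1 - β) ≠ 0 := (Real.sqrt_pos.mpr (sub_pos.mpr hβ.2)).ne'
  rw [hγ.eq_harmonicFlow hβ.2]
  refine ⟨fun μ => ?_, ?_⟩
  · have hθ : 2 * π * Complex.I * √(1 - β) = ((√(1 - β) * (2 * π) : ℝ) : ℂ) * Complex.I := by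
      push_cast; ring
    rw [hθ]
    exact Matrix.det_map_ofReal_sub_smul_one_eq_zero_iff (det_harmonicFlow hω _)
      (trace_harmonicFlow _ _) μ
  · rintro rfl
    refine harmonicFlow_eq_neg_one ?_
    rw [show (1 : ℝ) - 3 / 4 = (1 / 2) ^ 2 by norm_num, Real.sqrt_sq (by norm_num)]
    ring
end
end

section
/- For every β ∈ [0,1) and e ∈ [0,1), the quadratic form Q_{β,e} restricted to the periodic space D(1,2π) has Morse index exactly 1: there exists a one-dimensional complex subspace V of D(1,2π) such that Q_{β,e}(y) < 0 for all nonzero y ∈ V, and there is no two-dimensional complex subspace W of D(1,2π) with Q_{β,e}(y) < 0 for all nonzero y ∈ W. -/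
open Real Matrix

attribute [local instance] Matrix.normedAddCommGroup

noncomputable section

/-- The quadratic form `Q_{β,e}(y) = ∫₀^{2π} (|y'|² + (β/(1+e cos t) − 1)|y|²) dt`. -/
def Qform (β e : ℝ) (y : ℝ → ℂ) : ℝ :=
  ∫ t in (0 : ℝ)..(2 * π), (‖deriv y t‖ ^ 2 + (β / (1 + e * Real.cos t) - 1) * ‖y t‖ ^ 2)

/-!
Index at least one: along `y = 1 + e cos t` the identity `(β / u - 1) u² = β u - u²` makes the
potential term integrate to `2π(β - 1) - π e²`, which the kinetic term `π e²` exactly compensates,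
so `Q(c y) = 2π(β - 1)|c|² < 0`.

Index at most one: every two-dimensional space of periodic functions contains a nonzero element
of mean zero. The potential `β / (1 + e cos t) - 1` is at least `-1`, and Wirtinger's inequality
`∫ |y|² ≤ ∫ |y'|²` for periodic mean-zero `y` (Parseval, together with `ŷ'(n) = i n ŷ(n)`) makes
`Q` nonnegative there.
-/

open MeasureTheory Set

theorem exists_ne_zero_mul_add_mul_eq_zero {R : Type*} [CommRing R] [Nontrivial R] (a b : R) :
    ∃ c₁ c₂ : R, ¬(c₁ = 0 ∧ c₂ = 0) ∧ c₁ * a + c₂ * b = 0 := by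
  by_cases hb : b = 0
  · exact ⟨0, 1, by simp, by simp [hb]⟩
  · exact ⟨b, -a, fun h => hb h.1, by ring⟩

theorem fourierCoeffOn_zero {a b : ℝ} (hab : a < b) (f : ℝ → ℂ) :
    fourierCoeffOn hab f 0 = (1 / (b - a)) • ∫ x in a..b, f x := by
  simp [fourierCoeffOn_eq_integral]

theorem norm_fourierCoeffOn_le_of_hasDerivAt {a b : ℝ} (hab : a < b) {f f' : ℝ → ℂ}
    (hf : ∀ x ∈ Icc a b, HasDerivAt f (f' x) x) (hf' : IntervalIntegrable f' volume a b)
    (hper : f b = f a) {n : ℤ} (hn : n ≠ 0) :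
    ‖fourierCoeffOn hab f n‖ ≤ (b - a) / (2 * π) * ‖fourierCoeffOn hab f' n‖ := by
  rw [fourierCoeffOn_of_hasDerivAt hab hn (by rwa [uIcc_of_le hab.le]) hf', hper, sub_self,
    mul_zero, zero_sub, ← Complex.ofReal_sub]
  have hn1 : (1 : ℝ) ≤ |(n : ℝ)| := by exact_mod_cast Int.one_le_abs hn
  simp only [norm_mul, norm_div, norm_neg, norm_one, Complex.norm_real, Complex.norm_I,
    Complex.norm_intCast, Complex.norm_ofNat, Real.norm_eq_abs, abs_of_pos pi_pos,
    abs_of_pos (sub_pos.2 hab), mul_one]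
  calc 1 / (2 * π * |(n : ℝ)|) * ((b - a) * ‖fourierCoeffOn hab f' n‖)
      = (b - a) / (2 * π) * ‖fourierCoeffOn hab f' n‖ / |(n : ℝ)| := by ring
    _ ≤ (b - a) / (2 * π) * ‖fourierCoeffOn hab f' n‖ :=
      div_le_self (by have := sub_pos.2 hab; positivity) hn1

theorem wirtinger_inequality {a b : ℝ} (hab : a < b) {f f' : ℝ → ℂ}
    (hf : ∀ x ∈ Icc a b, HasDerivAt f (f' x) x) (hf' : MemLp f' 2 (volume.restrict (Ioc a b)))
    (hper : f b = f a) (hmean : ∫ x in a..b, f x = 0) :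
    ∫ x in a..b, ‖f x‖ ^ 2 ≤ ((b - a) / (2 * π)) ^ 2 * ∫ x in a..b, ‖f' x‖ ^ 2 := by
  have hf_cont : ContinuousOn f (Icc a b) := fun x hx => (hf x hx).continuousAt.continuousWithinAt
  have hL2 : MemLp f 2 (volume.restrict (Ioc a b)) := by
    obtain ⟨C, hC⟩ := isCompact_Icc.exists_bound_of_continuousOn hf_cont
    exact ((memLp_top_of_bound (hf_cont.aestronglyMeasurable measurableSet_Icc) C
      (ae_restrict_of_forall_mem measurableSet_Icc hC)).mono_exponent le_top).mono_measure
      (Measure.restrict_mono Ioc_subset_Icc_self le_rfl)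
  have hf'_int : IntervalIntegrable f' volume a b :=
    (intervalIntegrable_iff_integrableOn_Ioc_of_le hab.le).2 (hf'.integrable one_le_two)
  have hcoeff (n : ℤ) : ‖fourierCoeffOn hab f n‖ ^ 2
      ≤ ((b - a) / (2 * π)) ^ 2 * ‖fourierCoeffOn hab f' n‖ ^ 2 := by
    rcases eq_or_ne n 0 with rfl | hn
    · rw [fourierCoeffOn_zero, hmean, smul_zero, norm_zero, zero_pow two_ne_zero]
      positivity
    · rw [← mul_pow]
      exact pow_le_pow_left₀ (norm_nonneg _)
        (norm_fourierCoeffOn_le_of_hasDerivAt hab hf hf'_int hper hn) 2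
  have h := hasSum_le hcoeff (hasSum_sq_fourierCoeffOn hab hL2)
    ((hasSum_sq_fourierCoeffOn hab hf').mul_left _)
  rw [smul_eq_mul, smul_eq_mul, mul_left_comm] at h
  exact le_of_mul_le_mul_left h (inv_pos.2 (sub_pos.2 hab))

theorem one_add_mul_cos_pos {e : ℝ} (he : |e| < 1) (t : ℝ) : 0 < 1 + e * Real.cos t := by
  have : |e * Real.cos t| < 1 :=
    calc |e * Real.cos t| = |e| * |Real.cos t| := abs_mul _ _
      _ ≤ |e| := mul_le_of_le_one_right (abs_nonneg e) (abs_cos_le_one t)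
      _ < 1 := he
  linarith [neg_abs_le (e * Real.cos t)]

theorem Qform_nonneg_of_integral_eq_zero {β e : ℝ} (hβ : 0 ≤ β) (he : |e| < 1)
    {y : ℝ → ℂ} (hy : Differentiable ℝ y) (hper : y (2 * π) = y 0)
    (hmean : ∫ t in (0 : ℝ)..(2 * π), y t = 0) :
    0 ≤ Qform β e y := by
  set V : ℝ → ℝ := fun t => β / (1 + e * Real.cos t) - 1
  have hV : Continuous V := by
    have := one_add_mul_cos_pos he
    fun_prop (disch := exact fun t => (this t).ne')
  have hV_ge (t : ℝ) : -1 ≤ V t := by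
    have := div_nonneg hβ (one_add_mul_cos_pos he t).le
    simp only [V]; linarith
  have hVy : IntervalIntegrable (fun t => V t * ‖y t‖ ^ 2) volume 0 (2 * π) :=
    (hV.mul (hy.continuous.norm.pow 2)).intervalIntegrable _ _
  by_cases hdy : IntervalIntegrable (fun t => ‖deriv y t‖ ^ 2) volume 0 (2 * π)
  · have hdy_L2 : MemLp (deriv y) 2 (volume.restrict (Ioc 0 (2 * π))) :=
      (memLp_two_iff_integrable_sq_norm (measurable_deriv y).aestronglyMeasurable).2
        ((intervalIntegrable_iff_integrableOn_Ioc_of_le two_pi_pos.le).1 hdy)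
    have hw := wirtinger_inequality two_pi_pos (fun t _ => (hy t).hasDerivAt) hdy_L2 hper hmean
    rw [sub_zero, div_self two_pi_pos.ne', one_pow, one_mul] at hw
    have hVy_ge : -∫ t in (0 : ℝ)..(2 * π), ‖y t‖ ^ 2
        ≤ ∫ t in (0 : ℝ)..(2 * π), V t * ‖y t‖ ^ 2 := by
      rw [← intervalIntegral.integral_neg]
      exact intervalIntegral.integral_mono_on two_pi_pos.le
        ((hy.continuous.norm.pow 2).intervalIntegrable _ _).neg hVy
        fun t _ => by nlinarith [hV_ge t, sq_nonneg ‖y t‖]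
    rw [Qform, intervalIntegral.integral_add hdy hVy]
    linarith
  -- the junk value: `Qform` is `0` when its integrand is not integrable
  · rw [Qform, intervalIntegral.integral_undef]
    exact fun h => hdy (by simpa [V] using h.sub hVy)

theorem Qform_const_mul_one_add_mul_cos (β e : ℝ) (c : ℂ) :
    Qform β e (fun t => c * ((1 + e * Real.cos t : ℝ) : ℂ)) =
      ‖c‖ ^ 2 * (2 * π * (β - 1)) := by
  have hderiv (t : ℝ) : deriv (fun t => c * ((1 + e * Real.cos t : ℝ) : ℂ)) t
      = c * ((e * -Real.sin t : ℝ) : ℂ) :=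
    ((((Real.hasDerivAt_cos t).const_mul e).const_add 1).ofReal_comp.const_mul c).deriv
  have hpot (u : ℝ) : (β / u - 1) * u ^ 2 = β * u - u ^ 2 := by
    rcases eq_or_ne u 0 with rfl | hu
    · simp
    · field_simp
  have hintegrand (t : ℝ) : ‖deriv (fun t => c * ((1 + e * Real.cos t : ℝ) : ℂ)) t‖ ^ 2
      + (β / (1 + e * Real.cos t) - 1) * ‖c * ((1 + e * Real.cos t : ℝ) : ℂ)‖ ^ 2
      = ‖c‖ ^ 2 * ((β - 1) + e * (β - 2) * Real.cos t - e ^ 2 * Real.cos (2 * t)) := by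
    simp only [hderiv, norm_mul, Complex.norm_real, Real.norm_eq_abs, mul_pow, sq_abs]
    rw [Real.cos_two_mul]
    linear_combination
      ‖c‖ ^ 2 * hpot (1 + e * Real.cos t) + ‖c‖ ^ 2 * e ^ 2 * sin_sq_add_cos_sq t
  simp only [Qform, hintegrand, intervalIntegral.integral_const_mul]
  congr 1
  have hcos2 : ∫ t in (0 : ℝ)..(2 * π), Real.cos (2 * t) = 0 := by
    rw [intervalIntegral.integral_comp_mul_left Real.cos two_ne_zero, integral_cos]
    rw [show 2 * (2 * π) = (4 : ℕ) * π by push_cast; ring, Real.sin_nat_mul_pi]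
    simp
  have hii {f : ℝ → ℝ} (hf : Continuous f) : IntervalIntegrable f volume 0 (2 * π) :=
    hf.intervalIntegrable _ _
  rw [intervalIntegral.integral_sub (hii (by fun_prop)) (hii (by fun_prop)),
    intervalIntegral.integral_add (hii (by fun_prop)) (hii (by fun_prop)),
    intervalIntegral.integral_const_mul, intervalIntegral.integral_const_mul, hcos2, integral_cos,
    intervalIntegral.integral_const, smul_eq_mul, sin_two_pi, sin_zero]
  ring

/-- on the periodic domain `D(1,2π)`, the Morse index of `Q_{β,e}` equals 1:
there is a one-dimensional negative-definite subspace (the span of some `y`), and no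
two-dimensional negative-definite subspace. -/
theorem stmt_4 (β e : ℝ) (hβ : β ∈ Set.Ico (0 : ℝ) 1) (he : e ∈ Set.Ico (0 : ℝ) 1) :
    (∃ y : ℝ → ℂ, Differentiable ℝ y ∧ y (2 * π) = y 0 ∧
      ∀ c : ℂ, c ≠ 0 → Qform β e (fun t => c * y t) < 0) ∧
    (∀ y₁ y₂ : ℝ → ℂ, Differentiable ℝ y₁ → Differentiable ℝ y₂ →
      y₁ (2 * π) = y₁ 0 → y₂ (2 * π) = y₂ 0 →
      LinearIndependent ℂ ![y₁, y₂] →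
      ∃ c₁ c₂ : ℂ, ¬(c₁ = 0 ∧ c₂ = 0) ∧
        0 ≤ Qform β e (fun t => c₁ * y₁ t + c₂ * y₂ t)) := by
  refine ⟨⟨fun t => ((1 + e * Real.cos t : ℝ) : ℂ), by fun_prop, by simp, fun c hc => ?_⟩,
    fun y₁ y₂ hy₁ hy₂ hper₁ hper₂ _ => ?_⟩
  · rw [Qform_const_mul_one_add_mul_cos]
    exact mul_neg_of_pos_of_neg (by positivity)
      (mul_neg_of_pos_of_neg two_pi_pos (by linarith [hβ.2]))
  · obtain ⟨c₁, c₂, hc, hmean⟩ := exists_ne_zero_mul_add_mul_eq_zero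
      (∫ t in (0 : ℝ)..(2 * π), y₁ t) (∫ t in (0 : ℝ)..(2 * π), y₂ t)
    have he_abs : |e| < 1 := abs_lt.2 ⟨by linarith [he.1], he.2⟩
    refine ⟨c₁, c₂, hc, Qform_nonneg_of_integral_eq_zero hβ.1 he_abs (by fun_prop)
      (by simp only [hper₁, hper₂]) ?_⟩
    rwa [intervalIntegral.integral_add ((hy₁.continuous.intervalIntegrable _ _).const_mul c₁)
      ((hy₂.continuous.intervalIntegrable _ _).const_mul c₂),
      intervalIntegral.integral_const_mul, intervalIntegral.integral_const_mul]
end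
end
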